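/- arXiv:2603.15562 — 4 statements merged into one kernel-verified Lean document; each statement's English description precedes it below -/
import Mathlib

section
/- (Abstract form of the defect relation, Corollary 2.5, case R < ∞) Let 0 < R < ∞, let d, μ̃, m, m̃ be positive real numbers, and let T, N₁ : (0,R) → [0,∞) be nondecreasing functions. Assume: (a) limsup_{r→R⁻} T(r)/log(1/(R−r)) = ∞; (b) there exist a measurable set E ⊆ (0,R) with ∫_E dr/(R−r) < ∞ and constants C₁, C₂, C₃ ≥ 0 such that T(r) ≤ (m/m̃)·N₁(r) + C₁·log⁺ T(r) + C₂·log(1/(R−r)) + C₃ for all r ∈ (0,R) \ E. Then liminf_{r→R⁻} ( 1 − N₁(r)/(d·T(r)) ) ≤ 1 − m̃/(m·d). -/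
/-!
By (a), `T r` exceeds any multiple of `log (1 / (R - r))` for `r` arbitrarily close to `R`.
Since `∫_E dr / (R - r) < ∞` while `(r, (r + R) / 2)` carries `dr / (R - r)`-mass at least `1 / 2`,
for `r` close to `R` this interval contains a point `r' ∉ E`. There `T r' ≥ T r` and
`log (1 / (R - r')) ≤ log 2 + log (1 / (R - r))`, so every error term in (b) is at most a small
multiple of `T r'`, which gives `(1 - δ) T r' ≤ (m / m̃) N₁ r'` at points arbitrarily close to `R`.
-/

open MeasureTheory Filter
open scoped ENNReal

noncomputable def logPlus (x : ℝ) : ℝ := max (Real.log x) 0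

open Set Real Topology

lemma eventually_mul_logPlus_add_le_mul (c₁ c₀ : ℝ) {ε : ℝ} (hε : 0 < ε) :
    ∀ᶠ x in atTop, c₁ * logPlus x + c₀ ≤ ε * x := by
  have ho : (fun x => c₁ * log x + c₀) =o[atTop] id :=
    (isLittleO_log_id_atTop.const_mul_left c₁).add (Asymptotics.isLittleO_const_id_atTop c₀)
  filter_upwards [ho.def hε, eventually_ge_atTop 1] with x hx hx1
  have hlog : logPlus x = log x := max_eq_left (log_nonneg hx1)
  rw [hlog]
  simpa [abs_of_pos (by linarith : (0 : ℝ) < x)] using (le_abs_self _).trans hx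

lemma tendsto_log_one_div_sub_nhdsLT (R : ℝ) :
    Tendsto (fun r => log (1 / (R - r))) (𝓝[<] R) atTop := by
  have hsub : Tendsto (fun r => R - r) (𝓝[<] R) (𝓝[>] 0) := by
    refine tendsto_nhdsWithin_iff.2 ⟨?_, ?_⟩
    · simpa using ((continuous_sub_left R).tendsto R).mono_left nhdsWithin_le_nhds
    · filter_upwards [self_mem_nhdsWithin] with r hr using sub_pos.2 (mem_Iio.1 hr)
  exact (tendsto_log_atTop.comp (tendsto_inv_nhdsGT_zero.comp hsub)).congr fun r => by simp

lemma log_one_div_sub_le_log_two_add {R r r' : ℝ} (hr : r < R) (hr' : r' ≤ (r + R) / 2) :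
    log (1 / (R - r')) ≤ log 2 + log (1 / (R - r)) := by
  rw [← log_mul two_ne_zero (by simp; linarith)]
  gcongr
  · simp; linarith
  · rw [mul_one_div, div_le_div_iff₀ (by linarith) (by linarith)]
    linarith

lemma frequently_mul_lt_of_limsup_div_eq_top {α : Type*} {l : Filter α} {f g : α → ℝ}
    (hg : ∀ᶠ x in l, 0 < g x) (h : limsup (fun x => ((f x / g x : ℝ) : EReal)) l = ⊤) (M : ℝ) :
    ∃ᶠ x in l, M * g x < f x := by
  have hM : ∃ᶠ x in l, (M : EReal) < ((f x / g x : ℝ) : EReal) :=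
    frequently_lt_of_lt_limsup (by isBoundedDefault) (h ▸ EReal.coe_lt_top M)
  refine (hM.and_eventually hg).mono fun x ⟨hx, hgx⟩ => ?_
  exact (lt_div_iff₀ hgx).1 (EReal.coe_lt_coe_iff.1 hx)

lemma Filter.Frequently.of_exists_Ioo {α : Type*} [TopologicalSpace α] [LinearOrder α]
    [OrderTopology α] [NoMinOrder α] {a : α} {p : α → Prop}
    (h : ∃ᶠ x in 𝓝[<] a, ∃ y ∈ Ioo x a, p y) : ∃ᶠ x in 𝓝[<] a, p x := by
  contrapose! h
  obtain ⟨l, hla, hl⟩ := mem_nhdsLT_iff_exists_Ioo_subset.1 h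
  filter_upwards [Ioo_mem_nhdsLT hla] with x hx y hy
  exact hl ⟨hx.1.trans hy.1, hy.2⟩

lemma liminf_coe_le_of_frequently_le_add {α : Type*} {l : Filter α} {f : α → ℝ} {c : ℝ}
    (h : ∀ ε > 0, ∃ᶠ x in l, f x ≤ c + ε) : liminf (fun x => (f x : EReal)) l ≤ c := by
  refine EReal.le_of_forall_lt_iff_le.1 fun z hz => ?_
  have hcz : c < z := EReal.coe_lt_coe_iff.1 hz
  refine liminf_le_of_frequently_le ((h (z - c) (sub_pos.2 hcz)).mono fun x hx => ?_)
  exact EReal.coe_le_coe_iff.2 (by linarith)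

lemma eventually_exists_notMem_of_setLIntegral_lt_top {R : ℝ} {E : Set ℝ}
    (hE : ∫⁻ r in E, ENNReal.ofReal (1 / (R - r)) < ⊤) :
    ∀ᶠ r in 𝓝[<] R, ∃ r' ∈ Ioo r ((r + R) / 2), r' ∉ E := by
  set f : ℝ → ℝ≥0∞ := fun x => ENNReal.ofReal (1 / (R - x))
  have hsmall : Tendsto (fun r => ∫⁻ x in Ioo r R, f x ∂volume.restrict E) (𝓝[<] R) (𝓝 0) := by
    refine tendsto_setLIntegral_zero hE.ne ?_
    have hlen : Tendsto (fun r => ENNReal.ofReal (R - r)) (𝓝[<] R) (𝓝 0) := by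
      simpa using (ENNReal.tendsto_ofReal ((continuous_sub_left R).tendsto R)).mono_left
        nhdsWithin_le_nhds
    refine tendsto_of_tendsto_of_tendsto_of_le_of_le tendsto_const_nhds hlen (fun _ => zero_le)
      fun r => ?_
    calc volume.restrict E (Ioo r R) ≤ volume (Ioo r R) := Measure.restrict_apply_le _ _
      _ = ENNReal.ofReal (R - r) := Real.volume_Ioo
  filter_upwards [hsmall.eventually_lt_const (show (0 : ℝ≥0∞) < ENNReal.ofReal (1 / 2) by simp),
    self_mem_nhdsWithin] with r hr (hrR : r < R)
  by_contra! hsub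
  refine hr.not_ge ?_
  calc ENNReal.ofReal (1 / 2)
      = ∫⁻ _ in Ioo r ((r + R) / 2), ENNReal.ofReal (1 / (R - r)) := by
        rw [setLIntegral_const, Real.volume_Ioo, ← ENNReal.ofReal_mul (by positivity)]
        congr 1
        field_simp [(sub_pos.2 hrR).ne']
        ring
    _ ≤ ∫⁻ x in Ioo r ((r + R) / 2), f x := by
        refine setLIntegral_mono (by fun_prop) fun x hx => ?_
        exact ENNReal.ofReal_le_ofReal (one_div_le_one_div_of_le (by linarith [hx.2])
          (by linarith [hx.1]))
    _ ≤ ∫⁻ x in Ioo r R, f x ∂volume.restrict E := by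
        rw [Measure.restrict_restrict measurableSet_Ioo]
        exact lintegral_mono_set fun x hx => ⟨⟨hx.1, by linarith [hx.2]⟩, hsub x hx⟩

lemma frequently_sub_mul_le_of_second_main_theorem {R a C₁ C₂ C₃ δ : ℝ} {T N : ℝ → ℝ}
    {E : Set ℝ} (hR : 0 < R) (hδ : 0 < δ) (hC₂ : 0 ≤ C₂) (hT : MonotoneOn T (Ioo 0 R))
    (hgrowth : ∀ M, ∃ᶠ r in 𝓝[<] R, M * log (1 / (R - r)) < T r)
    (hE : ∀ᶠ r in 𝓝[<] R, ∃ r' ∈ Ioo r ((r + R) / 2), r' ∉ E)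
    (hSMT : ∀ r ∈ Ioo 0 R \ E,
      T r ≤ a * N r + C₁ * logPlus (T r) + C₂ * log (1 / (R - r)) + C₃) :
    ∃ᶠ r in 𝓝[<] R, 0 < T r ∧ (1 - δ) * T r ≤ a * N r := by
  obtain ⟨K, hK⟩ := (eventually_mul_logPlus_add_le_mul C₁ (C₂ * log 2 + C₃)
    (half_pos hδ)).exists_forall_of_atTop
  obtain ⟨M, hM, hC₂M⟩ : ∃ M, 0 ≤ M ∧ C₂ = δ / 2 * M := ⟨2 * C₂ / δ, by positivity, by field_simp⟩
  obtain ⟨K', hKK', hK'⟩ : ∃ K', K ≤ K' ∧ 1 ≤ K' := ⟨max K 1, le_max_left K 1, le_max_right K 1⟩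
  refine Frequently.of_exists_Ioo <| ((hgrowth (M + K')).and_eventually <|
    hE.and <| ((tendsto_log_one_div_sub_nhdsLT R).eventually_ge_atTop 1).and <|
    Ioo_mem_nhdsLT hR).mono ?_
  rintro r ⟨hTr, ⟨r', ⟨hrr', hr'⟩, hr'E⟩, hL, hr0, hrR⟩
  set L := log (1 / (R - r))
  have hr'R : r' < R := by linarith
  have hTr' : M * L + K' < T r' := by
    have hTrr' : T r ≤ T r' := hT ⟨hr0, hrR⟩ ⟨hr0.trans hrr', hr'R⟩ hrr'.le
    have hK'L : K' ≤ K' * L := le_mul_of_one_le_right (by linarith) hL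
    linarith [add_mul M K' L]
  have hML : 0 ≤ M * L := mul_nonneg hM (by linarith)
  have hlog : C₁ * logPlus (T r') + (C₂ * log 2 + C₃) ≤ δ / 2 * T r' :=
    hK _ (by linarith)
  have hCL : C₂ * log (1 / (R - r')) ≤ C₂ * log 2 + δ / 2 * T r' :=
    calc C₂ * log (1 / (R - r')) ≤ C₂ * (log 2 + L) :=
          mul_le_mul_of_nonneg_left (log_one_div_sub_le_log_two_add hrR hr'.le) hC₂
      _ = C₂ * log 2 + δ / 2 * (M * L) := by rw [hC₂M]; ring
      _ ≤ C₂ * log 2 + δ / 2 * T r' := by gcongr; linarith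
  refine ⟨r', ⟨hrr', hr'R⟩, by linarith, ?_⟩
  linarith [hSMT r' ⟨⟨hr0.trans hrr', hr'R⟩, hr'E⟩]

theorem abstract_defect_relation_general (R d m mt : ℝ)
    (hR : 0 < R) (hd : 0 < d) (hm : 0 < m) (hmt : 0 < mt)
    (T N₁ : ℝ → ℝ)
    (hTmono : MonotoneOn T (Set.Ioo 0 R))
    (ha : Filter.limsup (fun r => ((T r / Real.log (1 / (R - r)) : ℝ) : EReal))
      (nhdsWithin R (Set.Iio R)) = ⊤)
    (hb : ∃ E ⊆ Set.Ioo 0 R, MeasurableSet E ∧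
      (∫⁻ r in E, ENNReal.ofReal (1 / (R - r))) < ⊤ ∧
      ∃ C₁ C₂ C₃ : ℝ, 0 ≤ C₁ ∧ 0 ≤ C₂ ∧ 0 ≤ C₃ ∧
        ∀ r ∈ Set.Ioo 0 R \ E,
          T r ≤ (m / mt) * N₁ r + C₁ * logPlus (T r)
            + C₂ * Real.log (1 / (R - r)) + C₃) :
    Filter.liminf (fun r => ((1 - N₁ r / (d * T r) : ℝ) : EReal))
        (nhdsWithin R (Set.Iio R))
      ≤ ((1 - mt / (m * d) : ℝ) : EReal) := by
  obtain ⟨E, -, -, hE, C₁, C₂, C₃, -, hC₂, -, hSMT⟩ := hb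
  have hgrowth := frequently_mul_lt_of_limsup_div_eq_top
    ((tendsto_log_one_div_sub_nhdsLT R).eventually_gt_atTop 0) ha
  refine liminf_coe_le_of_frequently_le_add fun ε hε => ?_
  refine (frequently_sub_mul_le_of_second_main_theorem (δ := ε * m * d / mt) hR (by positivity)
    hC₂ hTmono hgrowth (eventually_exists_notMem_of_setLIntegral_lt_top hE) hSMT).mono ?_
  rintro r ⟨hT, hN⟩
  have hN' : (mt / (m * d) - ε) * (d * T r) ≤ N₁ r := by
    have := mul_le_mul_of_nonneg_left hN (by positivity : 0 ≤ mt / m)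
    field_simp at this ⊢
    linarith
  rw [← le_div_iff₀ (by positivity)] at hN'
  linarith

/-- **Abstract form of the defect relation (Corollary 2.5, case `R < ∞`).**
Let `0 < R < ∞`, let `d, μ̃, m, m̃ > 0`, and let `T, N₁ : (0,R) → [0,∞)` be
nondecreasing. If (a) `limsup_{r→R⁻} T(r)/log(1/(R−r)) = ∞`, and (b) there are a
measurable `E ⊆ (0,R)` with `∫_E dr/(R−r) < ∞` and constants `C₁, C₂, C₃ ≥ 0` with
`T(r) ≤ (m/m̃)·N₁(r) + C₁·log⁺ T(r) + C₂·log(1/(R−r)) + C₃` off `E`, then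
`liminf_{r→R⁻} (1 − N₁(r)/(d·T(r))) ≤ 1 − m̃/(m·d)`. -/
theorem abstract_defect_relation (R d μt m mt : ℝ)
    (hR : 0 < R) (hd : 0 < d) (hμt : 0 < μt) (hm : 0 < m) (hmt : 0 < mt)
    (T N₁ : ℝ → ℝ)
    (hT0 : ∀ r ∈ Set.Ioo 0 R, 0 ≤ T r) (hN0 : ∀ r ∈ Set.Ioo 0 R, 0 ≤ N₁ r)
    (hTmono : MonotoneOn T (Set.Ioo 0 R)) (hNmono : MonotoneOn N₁ (Set.Ioo 0 R))
    (ha : Filter.limsup (fun r => ((T r / Real.log (1 / (R - r)) : ℝ) : EReal))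
      (nhdsWithin R (Set.Iio R)) = ⊤)
    (hb : ∃ E ⊆ Set.Ioo 0 R, MeasurableSet E ∧
      (∫⁻ r in E, ENNReal.ofReal (1 / (R - r))) < ⊤ ∧
      ∃ C₁ C₂ C₃ : ℝ, 0 ≤ C₁ ∧ 0 ≤ C₂ ∧ 0 ≤ C₃ ∧
        ∀ r ∈ Set.Ioo 0 R \ E,
          T r ≤ (m / mt) * N₁ r + C₁ * logPlus (T r)
            + C₂ * Real.log (1 / (R - r)) + C₃) :
    Filter.liminf (fun r => ((1 - N₁ r / (d * T r) : ℝ) : EReal))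
        (nhdsWithin R (Set.Iio R))
      ≤ ((1 - mt / (m * d) : ℝ) : EReal) :=
  abstract_defect_relation_general R d m mt hR hd hm hmt T N₁ hTmono ha hb
end

section
/- (Abstract form of the ramification estimate, Corollary 2.6, case R < ∞) Let 0 < R < ∞, let d, m, m̃, μ be positive real numbers, and let T, N₁ : (0,R) → [0,∞) be nondecreasing functions. Assume: (a) limsup_{r→R⁻} T(r)/log(1/(R−r)) = ∞; (b) there exist a measurable set E ⊆ (0,R) with ∫_E dr/(R−r) < ∞ and constants C₁, C₂, C₃ ≥ 0 such that T(r) ≤ (m/m̃)·N₁(r) + C₁·log⁺ T(r) + C₂·log(1/(R−r)) + C₃ for all r ∈ (0,R) \ E; (c) there is a constant C₀ ≥ 0 with N₁(r) ≤ (d/μ)·T(r) + C₀ for all r ∈ (0,R). Then μ ≤ m·d/m̃. -/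
open MeasureTheory Filter
open scoped ENNReal

/-- The basic log⁺ estimate: `log⁺ x ≤ ε x + log (1/ε)` for `0 ≤ x`, `0 < ε ≤ 1`. -/
lemma logPlus_le_eps (x ε : ℝ) (hx : 0 ≤ x) (hε : 0 < ε) (hε1 : ε ≤ 1) :
    logPlus x ≤ ε * x + Real.log (1 / ε) := by
  have hlog : 0 ≤ Real.log (1 / ε) := Real.log_nonneg (by rw [le_div_iff₀ hε]; linarith)
  rcases eq_or_lt_of_le hx with h0 | hx
  · have : logPlus x = 0 := by simp [logPlus, ← h0, Real.log_zero]
    rw [this]; positivity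
  · have h1 : Real.log x ≤ ε * x + Real.log (1 / ε) := by
      have h := Real.log_le_sub_one_of_pos (mul_pos hε hx)
      rw [Real.log_mul hε.ne' hx.ne'] at h
      have h2 : Real.log (1 / ε) = -Real.log ε := by rw [one_div, Real.log_inv]
      linarith
    exact max_le h1 (by positivity)

set_option maxHeartbeats 1000000 in
/-- **Abstract form of the ramification estimate (Corollary 2.6, case `R < ∞`).**
Let `0 < R < ∞`, let `d, m, m̃, μ > 0`, and let `T, N₁ : (0,R) → [0,∞)` be
nondecreasing. Assume (a) `limsup_{r→R⁻} T(r)/log(1/(R−r)) = ∞`; (b) there are a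
measurable `E ⊆ (0,R)` with `∫_E dr/(R−r) < ∞` and constants `C₁, C₂, C₃ ≥ 0` with
`T(r) ≤ (m/m̃)·N₁(r) + C₁·log⁺ T(r) + C₂·log(1/(R−r)) + C₃` off `E`; and (c) there
is `C₀ ≥ 0` with `N₁(r) ≤ (d/μ)·T(r) + C₀` on `(0,R)`. Then `μ ≤ m·d/m̃`. -/
theorem abstract_ramification_estimate (R d m mt μ : ℝ)
    (hR : 0 < R) (hd : 0 < d) (hm : 0 < m) (hmt : 0 < mt) (hμ : 0 < μ)
    (T N₁ : ℝ → ℝ)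
    (hT0 : ∀ r ∈ Set.Ioo 0 R, 0 ≤ T r) (hN0 : ∀ r ∈ Set.Ioo 0 R, 0 ≤ N₁ r)
    (hTmono : MonotoneOn T (Set.Ioo 0 R)) (hNmono : MonotoneOn N₁ (Set.Ioo 0 R))
    (ha : Filter.limsup (fun r => ((T r / Real.log (1 / (R - r)) : ℝ) : EReal))
      (nhdsWithin R (Set.Iio R)) = ⊤)
    (hb : ∃ E ⊆ Set.Ioo 0 R, MeasurableSet E ∧
      (∫⁻ r in E, ENNReal.ofReal (1 / (R - r))) < ⊤ ∧
      ∃ C₁ C₂ C₃ : ℝ, 0 ≤ C₁ ∧ 0 ≤ C₂ ∧ 0 ≤ C₃ ∧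
        ∀ r ∈ Set.Ioo 0 R \ E,
          T r ≤ (m / mt) * N₁ r + C₁ * logPlus (T r)
            + C₂ * Real.log (1 / (R - r)) + C₃)
    (hc : ∃ C₀ : ℝ, 0 ≤ C₀ ∧ ∀ r ∈ Set.Ioo 0 R, N₁ r ≤ (d / μ) * T r + C₀) :
    μ ≤ m * d / mt := by
  obtain ⟨E, hE_sub, hE_meas, hE_int, C₁, C₂, C₃, hC₁, hC₂, hC₃, hb⟩ := hb
  obtain ⟨C₀, hC₀, hc⟩ := hc
  by_contra hcon
  push_neg at hcon
  set q : ℝ := (m / mt) * (d / μ) with hq_def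
  have hq0 : 0 ≤ q := by positivity
  have hq1 : q < 1 := by
    rw [hq_def, div_mul_div_comm, div_lt_one (by positivity)]
    have h := (div_lt_iff₀ hmt).mp hcon
    linarith
  have h1q : (0:ℝ) < 1 - q := by linarith
  set ε : ℝ := min 1 ((1 - q) / (2 * (C₁ + 1))) with hε_def
  have hεpos : 0 < ε := lt_min one_pos (by positivity)
  have hε1 : ε ≤ 1 := min_le_left _ _
  set Cl : ℝ := Real.log (1 / ε) with hCl_def
  have hCl0 : 0 ≤ Cl := Real.log_nonneg (by rw [le_div_iff₀ hεpos]; linarith)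
  set C' : ℝ := (m / mt) * C₀ + C₃ + C₁ * Cl with hC'_def
  have hC'0 : 0 ≤ C' := by positivity
  set A : ℝ := 2 * C₂ / (1 - q) with hA_def
  set B : ℝ := 2 * C' / (1 - q) with hB_def
  have hA0 : 0 ≤ A := by positivity
  have hB0 : 0 ≤ B := by positivity
  -- Off E, `T r ≤ A log(1/(R-r)) + B`.
  have key : ∀ r ∈ Set.Ioo 0 R \ E, T r ≤ A * Real.log (1 / (R - r)) + B := by
    intro r hrr
    obtain ⟨hr0, hrE⟩ := hrr
    have h1 := hb r ⟨hr0, hrE⟩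
    have h2 := hc r hr0
    have hT := hT0 r hr0
    have hlp := logPlus_le_eps (T r) ε hT hεpos hε1
    have fact1 : (m / mt) * N₁ r ≤ q * T r + (m / mt) * C₀ := by
      calc (m / mt) * N₁ r ≤ (m / mt) * ((d / μ) * T r + C₀) :=
            mul_le_mul_of_nonneg_left h2 (by positivity)
        _ = q * T r + (m / mt) * C₀ := by rw [hq_def]; ring
    have hCε : C₁ * ε ≤ (1 - q) / 2 := by
      have hε2 : ε ≤ (1 - q) / (2 * (C₁ + 1)) := min_le_right _ _
      have h3 := mul_le_mul_of_nonneg_left hε2 hC₁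
      have h4 : C₁ * ((1 - q) / (2 * (C₁ + 1))) ≤ (1 - q) / 2 := by
        rw [← mul_div_assoc, div_le_div_iff₀ (by positivity) (by positivity)]
        nlinarith [hq1, hC₁, mul_nonneg hC₁ hq0]
      calc C₁ * ε ≤ C₁ * ((1 - q) / (2 * (C₁ + 1))) := h3
        _ ≤ (1 - q) / 2 := h4
    have fact2 : C₁ * logPlus (T r) ≤ (1 - q) / 2 * T r + C₁ * Cl := by
      calc C₁ * logPlus (T r) ≤ C₁ * (ε * T r + Cl) :=
            mul_le_mul_of_nonneg_left hlp hC₁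
        _ = C₁ * ε * T r + C₁ * Cl := by ring
        _ ≤ (1 - q) / 2 * T r + C₁ * Cl := by
            linarith [mul_le_mul_of_nonneg_right hCε hT]
    have step : (1 - q) / 2 * T r ≤ C₂ * Real.log (1 / (R - r)) + C' := by
      rw [hC'_def]; linarith
    have h5 := mul_le_mul_of_nonneg_left step (le_of_lt (show (0:ℝ) < 2 / (1 - q) by positivity))
    calc T r = 2 / (1 - q) * ((1 - q) / 2 * T r) := by field_simp
      _ ≤ 2 / (1 - q) * (C₂ * Real.log (1 / (R - r)) + C') := h5
      _ = A * Real.log (1 / (R - r)) + B := by rw [hA_def, hB_def]; ring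
  -- absolute continuity of the finite integral over E
  obtain ⟨δ, hδ0, hδ⟩ := exists_pos_setLIntegral_lt_of_measure_lt hE_int.ne
    (ε := ENNReal.ofReal (1/2)) (by simp)
  set δ' : ℝ≥0∞ := min δ 1 with hδ'_def
  have hδ'0 : 0 < δ' := lt_min hδ0 one_pos
  have hδ'top : δ' ≠ ⊤ := ne_top_of_le_ne_top ENNReal.one_ne_top (min_le_right _ _)
  set δr : ℝ := δ'.toReal with hδr_def
  have hδr0 : 0 < δr := ENNReal.toReal_pos hδ'0.ne' hδ'top
  set c : ℝ := min δr (Real.exp (-1)) with hc_def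
  have hc0 : 0 < c := lt_min hδr0 (Real.exp_pos _)
  set r₁ : ℝ := max (R - c) (R / 2) with hr₁_def
  have hr₁R : r₁ < R := max_lt (by linarith) (by linarith)
  have hr₁0 : 0 < r₁ := lt_of_lt_of_le (by linarith) (le_max_right _ _)
  set K : ℝ := A + A * Real.log 2 + B with hK_def
  have hlog2 : 0 ≤ Real.log 2 := Real.log_nonneg one_le_two
  have hev : ∀ᶠ r in nhdsWithin R (Set.Iio R),
      ((T r / Real.log (1 / (R - r)) : ℝ) : EReal) ≤ (K : EReal) := by
    filter_upwards [Ioo_mem_nhdsLT_of_mem (⟨hr₁R, le_refl R⟩ : R ∈ Set.Ioc r₁ R)] with r hr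
    obtain ⟨hrr₁, hrR⟩ := hr
    have hr0 : 0 < r := lt_of_le_of_lt (by linarith : (0:ℝ) ≤ R/2)
      (lt_of_le_of_lt (le_max_right _ _) hrr₁)
    have hRr : 0 < R - r := by linarith
    have hRrc : R - r < c := by
      have : R - c < r := lt_of_le_of_lt (le_max_left _ _) hrr₁
      linarith
    set mid : ℝ := (r + R) / 2 with hmid_def
    have hrmid : r < mid := by rw [hmid_def]; linarith
    have hmidR : mid < R := by rw [hmid_def]; linarith
    -- find r' ∈ (r, mid) \ E
    have hnot : ¬ Set.Ioo r mid ⊆ E := by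
      intro hsub
      have hmeas : (volume.restrict E) (Set.Ioo r mid) < δ := by
        rw [Measure.restrict_apply measurableSet_Ioo]
        calc volume (Set.Ioo r mid ∩ E) ≤ volume (Set.Ioo r mid) :=
              measure_mono Set.inter_subset_left
          _ = ENNReal.ofReal (mid - r) := Real.volume_Ioo
          _ < ENNReal.ofReal δr := by
              rw [ENNReal.ofReal_lt_ofReal_iff hδr0]
              have : c ≤ δr := min_le_left _ _
              rw [hmid_def]; linarith
          _ = δ' := ENNReal.ofReal_toReal hδ'top
          _ ≤ δ := min_le_left _ _
      have hlow : ENNReal.ofReal (1/2) ≤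
          ∫⁻ x in Set.Ioo r mid, ENNReal.ofReal (1/(R - x)) ∂(volume.restrict E) := by
        rw [Measure.restrict_restrict measurableSet_Ioo,
          Set.inter_eq_self_of_subset_left hsub]
        have heq : ENNReal.ofReal (1/2)
            = ENNReal.ofReal (1/(R - r)) * volume (Set.Ioo r mid) := by
          rw [Real.volume_Ioo, ← ENNReal.ofReal_mul (by positivity)]
          congr 1
          rw [hmid_def]; field_simp; ring
        rw [heq]
        calc ENNReal.ofReal (1/(R - r)) * volume (Set.Ioo r mid)
            = ∫⁻ _ in Set.Ioo r mid, ENNReal.ofReal (1/(R - r)) :=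
              (setLIntegral_const _ _).symm
          _ ≤ ∫⁻ x in Set.Ioo r mid, ENNReal.ofReal (1/(R - x)) := by
              refine setLIntegral_mono
                ((measurable_const.div (measurable_const.sub measurable_id)).ennreal_ofReal)
                (fun x hx => ?_)
              refine ENNReal.ofReal_le_ofReal ?_
              have hx2 : 0 < R - x := by
                have := hx.2; rw [hmid_def] at this
                have : x < R := by linarith
                linarith
              exact one_div_le_one_div_of_le hx2 (by linarith [hx.1])
      exact absurd (hδ _ hmeas) (not_lt.mpr hlow)
    obtain ⟨r', hr'mem, hr'E⟩ := Set.not_subset.mp hnot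
    have hr'0R : r' ∈ Set.Ioo 0 R := ⟨lt_trans hr0 hr'mem.1, lt_trans hr'mem.2 hmidR⟩
    have hTT : T r ≤ T r' := hTmono ⟨hr0, hrR⟩ hr'0R (le_of_lt hr'mem.1)
    have hTr' := key r' ⟨hr'0R, hr'E⟩
    -- log comparison
    have hRr' : 0 < R - r' := by linarith [hr'0R.2]
    have hRr'half : (R - r) / 2 < R - r' := by
      have := hr'mem.2; rw [hmid_def] at this; linarith
    have hlogle : Real.log (1/(R - r')) ≤ Real.log 2 + Real.log (1/(R - r)) := by
      have h6 : 1/(R - r') ≤ 2/(R - r) := by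
        rw [div_le_div_iff₀ hRr' hRr]; linarith
      have h7 : Real.log (1/(R - r')) ≤ Real.log (2/(R - r)) :=
        Real.log_le_log (by positivity) h6
      have h8 : Real.log (2/(R - r)) = Real.log 2 + Real.log (1/(R - r)) := by
        rw [show (2:ℝ)/(R - r) = 2 * (1/(R - r)) by ring,
          Real.log_mul two_ne_zero (by positivity)]
      linarith
    set L : ℝ := Real.log (1/(R - r)) with hL_def
    have hL1 : 1 ≤ L := by
      have hc2 : R - r < Real.exp (-1) := lt_of_lt_of_le hRrc (min_le_right _ _)
      have h9 : Real.exp 1 ≤ 1/(R - r) := by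
        rw [le_div_iff₀ hRr]
        have := Real.exp_pos (1:ℝ)
        have h10 : Real.exp 1 * (R - r) < Real.exp 1 * Real.exp (-1) :=
          (mul_lt_mul_iff_right₀ this).mpr hc2
        rw [← Real.exp_add] at h10
        norm_num at h10
        linarith
      calc (1:ℝ) = Real.log (Real.exp 1) := (Real.log_exp 1).symm
        _ ≤ L := Real.log_le_log (Real.exp_pos 1) h9
    have hL0 : 0 < L := by linarith
    have hfinal : T r ≤ A * (Real.log 2 + L) + B := by
      calc T r ≤ T r' := hTT
        _ ≤ A * Real.log (1/(R - r')) + B := hTr'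
        _ ≤ A * (Real.log 2 + L) + B := by
            have := mul_le_mul_of_nonneg_left hlogle hA0
            linarith
    have hdiv : T r / L ≤ K := by
      rw [div_le_iff₀ hL0, hK_def]
      have f1 : A * 1 ≤ A * L := mul_le_mul_of_nonneg_left hL1 hA0
      have f2 : B * 1 ≤ B * L := mul_le_mul_of_nonneg_left hL1 hB0
      have f3 : A * Real.log 2 * 1 ≤ A * Real.log 2 * L :=
        mul_le_mul_of_nonneg_left hL1 (mul_nonneg hA0 hlog2)
      linarith
    exact_mod_cast EReal.coe_le_coe_iff.mpr hdiv
  have hK : Filter.limsup (fun r => ((T r / Real.log (1 / (R - r)) : ℝ) : EReal))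
      (nhdsWithin R (Set.Iio R)) ≤ (K : EReal) :=
    Filter.limsup_le_of_le (by isBoundedDefault) hev
  rw [ha] at hK
  exact EReal.coe_ne_top K (top_le_iff.mp hK)
end

section
/- (Borel-type growth lemma, used in the proof of Theorem 3.3) Let T : [0,1) → ℝ be a continuous nondecreasing function with T(r) ≥ 1 for all r. Then the set E = { r ∈ [0,1) : T( r + (1−r)/(e·T(r)) ) > e·T(r) } satisfies ∫_E dr/(1−r) < ∞. -/
open MeasureTheory
open scoped ENNReal Classical

noncomputable section BorelAux

variable (T : ℝ → ℝ)

/-- The step function `s(x) = x + (1-x)/(e T(x))`. -/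
def sfun (x : ℝ) : ℝ := x + (1 - x) / (Real.exp 1 * T x)

/-- The exceptional set. -/
def Eset : Set ℝ := {r ∈ Set.Ico (0 : ℝ) 1 | Real.exp 1 * T r < T (sfun T r)}

/-- The tail of the exceptional set beyond threshold `t`. -/
def Sset (t : ℝ) : Set ℝ := Eset T ∩ Set.Ico t 1

lemma Sset_bddBelow (t : ℝ) : BddBelow (Sset T t) :=
  ⟨t, fun _ hy => hy.2.1⟩

lemma sInf_mem_Ico {t : ℝ} (ht : t ∈ Set.Ico (0:ℝ) 1) (h : (Sset T t).Nonempty) :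
    sInf (Sset T t) ∈ Set.Ico (0:ℝ) 1 := by
  obtain ⟨x, hx⟩ := h
  constructor
  · exact le_trans ht.1 (le_csInf ⟨x, hx⟩ fun y hy => hy.2.1)
  · exact lt_of_le_of_lt (csInf_le (Sset_bddBelow T t) hx) hx.2.2

lemma exists_pick (n : ℕ) (t : ℝ) (ht : t ∈ Set.Ico (0:ℝ) 1)
    (h : (Sset T t).Nonempty) :
    ∃ p ∈ Sset T t,
      p < sInf (Sset T t) + (1 - sInf (Sset T t)) * Real.exp (-(n:ℝ)) / 2 := by
  apply Real.lt_sInf_add_pos h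
  have h1 : 0 < 1 - sInf (Sset T t) := by linarith [(sInf_mem_Ico T ht h).2]
  have h2 := Real.exp_pos (-(n:ℝ))
  positivity

/-- Pick a point of `Sset T t` within `(1 - inf)·e^{-n}/2` of its infimum
(or a default point if the tail set is empty). -/
def pickP (n : ℕ) (t : ℝ) : ℝ :=
  if h : t ∈ Set.Ico (0:ℝ) 1 ∧ (Sset T t).Nonempty then
    (exists_pick T n t h.1 h.2).choose
  else (t + 1) / 2

/-- The thresholds. -/
def tseq : ℕ → ℝ
  | 0 => 0
  | n + 1 => sfun T (pickP T n (tseq n))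

/-- The chosen points. -/
def pseq (n : ℕ) : ℝ := pickP T n (tseq T n)

/-- Left endpoints of the covering intervals. -/
def qseq (n : ℕ) : ℝ :=
  if (Sset T (tseq T n)).Nonempty then sInf (Sset T (tseq T n)) else tseq T n

variable {T}
variable (hmono : MonotoneOn T (Set.Ico 0 1))
variable (hT1 : ∀ r ∈ Set.Ico (0 : ℝ) 1, 1 ≤ T r)

section Basic
include hT1

lemma two_le_eT {x : ℝ} (hx : x ∈ Set.Ico (0:ℝ) 1) : 2 ≤ Real.exp 1 * T x := by
  have h1 := hT1 x hx
  have h2 : (2:ℝ) ≤ Real.exp 1 := by nlinarith [Real.add_one_le_exp (1:ℝ)]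
  nlinarith

lemma le_sfun {x : ℝ} (hx : x ∈ Set.Ico (0:ℝ) 1) : x ≤ sfun T x := by
  have h2 := two_le_eT hT1 hx
  have : 0 ≤ (1 - x) / (Real.exp 1 * T x) :=
    div_nonneg (by linarith [hx.2]) (by linarith)
  unfold sfun; linarith

lemma sfun_lt_one {x : ℝ} (hx : x ∈ Set.Ico (0:ℝ) 1) : sfun T x < 1 := by
  have h2 := two_le_eT hT1 hx
  have hx1 : x < 1 := hx.2
  have : (1 - x) / (Real.exp 1 * T x) < 1 - x :=
    div_lt_self (by linarith) (by linarith)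
  unfold sfun; linarith

lemma sfun_mem {x : ℝ} (hx : x ∈ Set.Ico (0:ℝ) 1) : sfun T x ∈ Set.Ico (0:ℝ) 1 :=
  ⟨le_trans hx.1 (le_sfun hT1 hx), sfun_lt_one hT1 hx⟩

lemma pickP_mem {n : ℕ} {t : ℝ} (ht : t ∈ Set.Ico (0:ℝ) 1) :
    t ≤ pickP T n t ∧ pickP T n t ∈ Set.Ico (0:ℝ) 1 := by
  unfold pickP
  by_cases h : (Sset T t).Nonempty
  · rw [dif_pos ⟨ht, h⟩]
    have hmem := (exists_pick T n t ht h).choose_spec.1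
    exact ⟨hmem.2.1, hmem.1.1⟩
  · rw [dif_neg (by tauto)]
    constructor
    · linarith [ht.2]
    · constructor <;> [linarith [ht.1]; linarith [ht.2]]

lemma tseq_mem : ∀ n, tseq T n ∈ Set.Ico (0:ℝ) 1 := by
  intro n
  induction n with
  | zero => exact ⟨le_refl _, by norm_num [tseq]⟩
  | succ n ih =>
    exact sfun_mem hT1 (pickP_mem hT1 ih).2

lemma pseq_mem (n : ℕ) : pseq T n ∈ Set.Ico (0:ℝ) 1 :=
  (pickP_mem hT1 (tseq_mem hT1 n)).2

lemma tseq_le_pseq (n : ℕ) : tseq T n ≤ pseq T n :=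
  (pickP_mem hT1 (tseq_mem hT1 n)).1

lemma pseq_le_tseq_succ (n : ℕ) : pseq T n ≤ tseq T (n + 1) :=
  le_sfun hT1 (pseq_mem hT1 n)

lemma tseq_le_succ (n : ℕ) : tseq T n ≤ tseq T (n + 1) :=
  le_trans (tseq_le_pseq hT1 n) (pseq_le_tseq_succ hT1 n)

lemma pseq_spec {n : ℕ} (h : (Sset T (tseq T n)).Nonempty) :
    pseq T n ∈ Sset T (tseq T n) ∧
      pseq T n < sInf (Sset T (tseq T n)) +
        (1 - sInf (Sset T (tseq T n))) * Real.exp (-(n:ℝ)) / 2 := by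
  have ht := tseq_mem hT1 n
  unfold pseq pickP
  rw [dif_pos ⟨ht, h⟩]
  exact (exists_pick T n (tseq T n) ht h).choose_spec

end Basic

section Growth
include hmono hT1

lemma one_sub_tseq_succ (n : ℕ) :
    1 - tseq T (n + 1) =
      (1 - pseq T n) * (1 - 1 / (Real.exp 1 * T (pseq T n))) := by
  have h2 := two_le_eT hT1 (pseq_mem hT1 n)
  have hne : Real.exp 1 * T (pseq T n) ≠ 0 := by linarith
  show 1 - sfun T (pseq T n) = _
  unfold sfun
  field_simp
  ring

lemma growth : ∀ n, (Sset T (tseq T n)).Nonempty → Real.exp n ≤ T (pseq T n) := by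
  intro n
  induction n with
  | zero =>
    intro h
    have hp := (pseq_spec hT1 h).1
    simpa using hT1 _ hp.1.1
  | succ n ih =>
    intro h
    -- alive at n since thresholds increase
    have hsub : Sset T (tseq T (n+1)) ⊆ Sset T (tseq T n) := by
      intro x hx
      exact ⟨hx.1, le_trans (tseq_le_succ hT1 n) hx.2.1, hx.2.2⟩
    have hn : (Sset T (tseq T n)).Nonempty := h.mono hsub
    have hIH := ih hn
    have hpE : pseq T n ∈ Eset T := (pseq_spec hT1 hn).1.1
    have hkey : Real.exp 1 * T (pseq T n) < T (tseq T (n+1)) := hpE.2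
    have hple : tseq T (n+1) ≤ pseq T (n+1) := (pseq_spec hT1 h).1.2.1
    have hmle : T (tseq T (n+1)) ≤ T (pseq T (n+1)) :=
      hmono (tseq_mem hT1 (n+1)) (pseq_mem hT1 (n+1)) hple
    have hexp : Real.exp ((n:ℝ)+1) = Real.exp n * Real.exp 1 := by
      rw [Real.exp_add]
    have he := Real.exp_pos (1:ℝ)
    push_cast
    rw [hexp] at *
    nlinarith
end Growth

section Terms
include hmono hT1

lemma alive_facts {n : ℕ} (h : (Sset T (tseq T n)).Nonempty) :
    qseq T n = sInf (Sset T (tseq T n)) ∧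
      qseq T n ≤ pseq T n ∧ qseq T n ∈ Set.Ico (0:ℝ) 1 ∧
      tseq T n ≤ qseq T n := by
  have hq : qseq T n = sInf (Sset T (tseq T n)) := if_pos h
  refine ⟨hq, ?_, ?_, ?_⟩
  · rw [hq]; exact csInf_le (Sset_bddBelow T _) (pseq_spec hT1 h).1
  · rw [hq]; exact sInf_mem_Ico T (tseq_mem hT1 n) h
  · rw [hq]; exact le_csInf h fun y hy => hy.2.1

lemma len_bound {n : ℕ} (h : (Sset T (tseq T n)).Nonempty) :
    tseq T (n+1) - qseq T n ≤ (1 - qseq T n) * Real.exp (-(n:ℝ)) ∧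
      (1 - qseq T n) / 4 ≤ 1 - tseq T (n+1) := by
  obtain ⟨hq, hqp, hqI, -⟩ := alive_facts hmono hT1 h
  set p := pseq T n with hpdef
  set q := qseq T n with hqdef
  set A := Real.exp (-(n:ℝ)) with hAdef
  have hApos : 0 < A := Real.exp_pos _
  have hA1 : A ≤ 1 := by
    rw [hAdef, ← Real.exp_zero]
    exact Real.exp_le_exp.mpr (neg_nonpos.mpr (Nat.cast_nonneg n))
  have hAe : A * Real.exp n = 1 := by
    rw [hAdef, ← Real.exp_add]; simp
  have hU : Real.exp n ≤ T p := growth hmono hT1 n h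
  have hpI := pseq_mem hT1 n
  have h2 := two_le_eT hT1 hpI
  have hepos : (0:ℝ) < Real.exp 1 * T p := by linarith
  have hexp1 : (2:ℝ) ≤ Real.exp 1 := by nlinarith [Real.add_one_le_exp (1:ℝ)]
  have hexpn : (0:ℝ) < Real.exp (n:ℝ) := Real.exp_pos _
  have hpick : p < q + (1 - q) * A / 2 := by
    have := (pseq_spec hT1 h).2
    rw [← hq] at this
    exact this
  have hp1 : p < 1 := hpI.2
  have hq1 : q < 1 := hqI.2
  -- the key quantity
  set d := (1 - p) / (Real.exp 1 * T p) with hddef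
  have hts : tseq T (n+1) = p + d := rfl
  have hd0 : 0 ≤ d := div_nonneg (by linarith) (by linarith)
  have hdle : d ≤ (1 - p) * A / 2 := by
    rw [hddef, div_le_iff₀ hepos]
    have hAeT : 2 ≤ A * (Real.exp 1 * T p) := by
      have h1 : Real.exp 1 * Real.exp (n:ℝ) ≤ Real.exp 1 * T p :=
        mul_le_mul_of_nonneg_left hU (by linarith)
      have h2' : A * (Real.exp 1 * Real.exp (n:ℝ)) ≤ A * (Real.exp 1 * T p) :=
        mul_le_mul_of_nonneg_left h1 (le_of_lt hApos)
      have h3 : A * (Real.exp 1 * Real.exp (n:ℝ)) = Real.exp 1 := by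
        rw [show A * (Real.exp 1 * Real.exp (n:ℝ)) = (A * Real.exp (n:ℝ)) * Real.exp 1 by ring,
          hAe, one_mul]
      linarith
    nlinarith [mul_nonneg (le_of_lt hApos) (sub_nonneg.mpr hp1.le)]
  have hdhalf : d ≤ (1 - p) / 2 := by
    rw [hddef, div_le_div_iff₀ hepos (by norm_num)]
    nlinarith
  constructor
  · rw [hts]
    nlinarith [mul_le_mul_of_nonneg_right (sub_le_sub_left hqp 1) hApos.le]
  · rw [hts]
    nlinarith

omit hmono in
/-- Dead case: once the tail set is empty the covering interval misses `E`. -/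
lemma dead_empty {n : ℕ} (h : ¬ (Sset T (tseq T n)).Nonempty) :
    Eset T ∩ Set.Ico (qseq T n) (tseq T (n+1)) = ∅ := by
  have hq : qseq T n = tseq T n := if_neg h
  rw [Set.eq_empty_iff_forall_notMem]
  intro x hx
  exact h ⟨x, hx.1, hq ▸ hx.2.1, lt_trans hx.2.2 (tseq_mem hT1 (n+1)).2⟩

/-- The per-interval integral bound. -/
lemma term_bound (n : ℕ) :
    (∫⁻ r in Eset T ∩ Set.Ico (qseq T n) (tseq T (n+1)),
        ENNReal.ofReal (1 / (1 - r))) ≤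
      ENNReal.ofReal (4 * Real.exp (-(n:ℝ))) := by
  by_cases h : (Sset T (tseq T n)).Nonempty
  · obtain ⟨hlen, hwid⟩ := len_bound hmono hT1 h
    obtain ⟨-, hqp, hqI, -⟩ := alive_facts hmono hT1 h
    set q := qseq T n
    set t' := tseq T (n+1) with ht'
    have hq1 : q < 1 := hqI.2
    have ht'1 : 0 < 1 - t' := by nlinarith
    have hApos : (0:ℝ) < Real.exp (-(n:ℝ)) := Real.exp_pos _
    calc (∫⁻ r in Eset T ∩ Set.Ico q t', ENNReal.ofReal (1 / (1 - r)))
        ≤ ∫⁻ r in Set.Ico q t', ENNReal.ofReal (1 / (1 - r)) :=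
          lintegral_mono_set Set.inter_subset_right
      _ ≤ ∫⁻ _r in Set.Ico q t', ENNReal.ofReal (1 / (1 - t')) := by
          apply setLIntegral_mono measurable_const
          intro r hr
          apply ENNReal.ofReal_le_ofReal
          apply one_div_le_one_div_of_le ht'1
          linarith [hr.2]
      _ = ENNReal.ofReal (1 / (1 - t')) * volume (Set.Ico q t') := by
          rw [setLIntegral_const]
      _ = ENNReal.ofReal (1 / (1 - t') * (t' - q)) := by
          rw [Real.volume_Ico, ← ENNReal.ofReal_mul (by positivity)]
      _ ≤ ENNReal.ofReal (4 * Real.exp (-(n:ℝ))) := by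
          apply ENNReal.ofReal_le_ofReal
          rw [one_div, inv_mul_le_iff₀ ht'1]
          nlinarith
  · rw [dead_empty hT1 h]
    simp

/-- Every point of `E` is covered by some interval `[q n, t (n+1))`. -/
lemma cover :
    Eset T ⊆ ⋃ n, (Eset T ∩ Set.Ico (qseq T n) (tseq T (n+1))) := by
  intro x hxE
  have hx1 : x < 1 := hxE.1.2
  -- T x is eventually dominated by exp n, so x < tseq n for some n
  have hbig : ∃ n : ℕ, ¬ tseq T n ≤ x := by
    by_contra hc
    push_neg at hc
    -- then the chain stays alive forever and exp n ≤ T x for all n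
    have hTx : ∀ n : ℕ, Real.exp n ≤ T x := by
      intro n
      have halive : (Sset T (tseq T n)).Nonempty := ⟨x, hxE, hc n, hx1⟩
      have hg := growth hmono hT1 n halive
      have hple : pseq T n ≤ x := le_trans (pseq_le_tseq_succ hT1 n) (hc (n+1))
      have := hmono (pseq_mem hT1 n) hxE.1 hple
      linarith
    obtain hn := hTx (Nat.ceil (T x))
    have h1 : (Nat.ceil (T x) : ℝ) + 1 ≤ Real.exp (Nat.ceil (T x) : ℝ) :=
      Real.add_one_le_exp _
    have h2 : T x ≤ (Nat.ceil (T x) : ℝ) := Nat.le_ceil _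
    linarith
  classical
  have hm := Nat.find_spec hbig
  set m := Nat.find hbig with hmdef
  have hm0 : m ≠ 0 := by
    intro h0
    rw [h0] at hm
    exact hm hxE.1.1
  obtain ⟨k, hk⟩ := Nat.exists_eq_succ_of_ne_zero hm0
  have hk1 : tseq T k ≤ x := by
    by_contra hc
    have h2 : Nat.find hbig ≤ k := Nat.find_le hc
    rw [← hmdef] at h2
    omega
  have hk2 : x < tseq T (k+1) := by
    rw [hk] at hm
    exact not_le.mp hm
  have halive : (Sset T (tseq T k)).Nonempty := ⟨x, hxE, hk1, hx1⟩
  have hq : qseq T k ≤ x := by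
    rw [(alive_facts hmono hT1 halive).1]
    exact csInf_le (Sset_bddBelow T _) ⟨hxE, hk1, hx1⟩
  exact Set.mem_iUnion.mpr ⟨k, hxE, hq, hk2⟩

end Terms

/-- The geometric sum is finite. -/
lemma geom_sum_lt_top :
    (∑' n : ℕ, ENNReal.ofReal (4 * Real.exp (-(n:ℝ)))) < ⊤ := by
  have heq : ∀ n : ℕ, ENNReal.ofReal (4 * Real.exp (-(n:ℝ))) =
      ENNReal.ofReal 4 * ENNReal.ofReal (Real.exp (-1)) ^ n := by
    intro n
    rw [ENNReal.ofReal_mul (by norm_num), ← ENNReal.ofReal_pow (Real.exp_pos _).le,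
      ← Real.exp_nat_mul]
    norm_num
  rw [tsum_congr heq, ENNReal.tsum_mul_left, ENNReal.tsum_geometric]
  have hr : ENNReal.ofReal (Real.exp (-1)) < 1 := by
    rw [← ENNReal.ofReal_one]
    exact ENNReal.ofReal_lt_ofReal_iff_of_nonneg (Real.exp_pos _).le |>.mpr
      (by rw [← Real.exp_zero]; exact Real.exp_lt_exp.mpr (by norm_num))
  exact ENNReal.mul_lt_top ENNReal.ofReal_lt_top
    (ENNReal.inv_lt_top.mpr (tsub_pos_of_lt hr))

end BorelAux

/-- **Borel-type growth lemma.** Let `T : [0,1) → ℝ` be a continuous nondecreasing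
function with `T r ≥ 1` for all `r`. Then the set
`E = { r ∈ [0,1) : T(r + (1−r)/(e·T r)) > e·T r }` satisfies `∫_E dr/(1−r) < ∞`. -/
theorem borel_growth_lemma (T : ℝ → ℝ)
    (hcont : ContinuousOn T (Set.Ico 0 1))
    (hmono : MonotoneOn T (Set.Ico 0 1))
    (hT1 : ∀ r ∈ Set.Ico (0 : ℝ) 1, 1 ≤ T r) :
    (∫⁻ r in {r ∈ Set.Ico (0 : ℝ) 1 |
        Real.exp 1 * T r < T (r + (1 - r) / (Real.exp 1 * T r))},
      ENNReal.ofReal (1 / (1 - r))) < ⊤ := by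
  have hE : {r ∈ Set.Ico (0 : ℝ) 1 |
      Real.exp 1 * T r < T (r + (1 - r) / (Real.exp 1 * T r))} = Eset T := rfl
  rw [hE]
  calc (∫⁻ r in Eset T, ENNReal.ofReal (1 / (1 - r)))
      ≤ ∫⁻ r in ⋃ n, (Eset T ∩ Set.Ico (qseq T n) (tseq T (n+1))),
          ENNReal.ofReal (1 / (1 - r)) :=
        lintegral_mono_set (cover hmono hT1)
    _ ≤ ∑' n : ℕ, ∫⁻ r in Eset T ∩ Set.Ico (qseq T n) (tseq T (n+1)),
          ENNReal.ofReal (1 / (1 - r)) := lintegral_iUnion_le _ _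
    _ ≤ ∑' n : ℕ, ENNReal.ofReal (4 * Real.exp (-(n:ℝ))) :=
        ENNReal.tsum_le_tsum fun n => term_bound hmono hT1 n
    _ < ⊤ := geom_sum_lt_top
end

section
/- (Removal of the exceptional set, used in the proof of Theorem 3.3) Let h : (0,1) → [0,∞) be a nondecreasing function, let 0 < l < 1, K > 0, and let E ⊆ (0,1) be a measurable set with ∫_E dr/(1−r) < ∞. Suppose that h(r) ≤ K·(1−r)^{−l}·( log( e/(1−r) ) )^{l} for all r ∈ (0,1) \ E. Then for every l' with l < l' < 1 there exists a constant K' > 0 such that h(r) ≤ K'·(1−r)^{−l'} for all r ∈ (0,1). -/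
open MeasureTheory Filter Set Topology Real
open scoped ENNReal

/-!
Every interval `(r, (1 + r) / 2)` carries `dr / (1 - r)`-mass at least `1 / 2`, while the
`dr / (1 - r)`-mass of `E ∩ (r, 1)` tends to `0`; so for `r` near `1` such an interval contains a
point `s ∉ E`. Then `h r ≤ h s`, and as `1 - s ≥ (1 - r) / 2` the bound at `s` costs only a
constant factor, while the logarithm is absorbed into the extra power `(1 - r) ^ (l - l')`.
Away from `1`, monotonicity bounds `h` by a constant.
-/

lemma ofReal_half_le_setLIntegral_inv_one_sub {r : ℝ} (hr : r < 1) :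
    ENNReal.ofReal (1 / 2) ≤ ∫⁻ t in Ioo r ((1 + r) / 2), ENNReal.ofReal (1 / (1 - t)) := by
  have hlen : 0 < 1 - r := by linarith
  calc ENNReal.ofReal (1 / 2)
      = ENNReal.ofReal (1 / (1 - r)) * volume (Ioo r ((1 + r) / 2)) := by
        rw [Real.volume_Ioo, ← ENNReal.ofReal_mul (by positivity)]
        congr 1
        field_simp
        ring
    _ = ∫⁻ _ in Ioo r ((1 + r) / 2), ENNReal.ofReal (1 / (1 - r)) := (setLIntegral_const _ _).symm
    _ ≤ ∫⁻ t in Ioo r ((1 + r) / 2), ENNReal.ofReal (1 / (1 - t)) := by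
        refine setLIntegral_mono' measurableSet_Ioo fun t ⟨hrt, htm⟩ ↦ ?_
        gcongr
        linarith

lemma eventually_exists_notMem_Ioo_of_setLIntegral_lt_top {E : Set ℝ} (hE : E ⊆ Iio 1)
    (hEfin : ∫⁻ r in E, ENNReal.ofReal (1 / (1 - r)) < ⊤) :
    ∀ᶠ r in 𝓝[<] 1, ∃ s ∈ Ioo r ((1 + r) / 2), s ∉ E := by
  have hvol : Tendsto (fun r ↦ volume.restrict E (Ioi r)) (𝓝[<] 1) (𝓝 0) := by
    have hlen : Tendsto (fun r : ℝ ↦ ENNReal.ofReal (1 - r)) (𝓝[<] 1) (𝓝 0) := by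
      rw [← ENNReal.ofReal_zero]
      refine ENNReal.tendsto_ofReal (Tendsto.mono_left ?_ nhdsWithin_le_nhds)
      simpa using ((continuous_sub_left (1 : ℝ)).tendsto 1)
    refine tendsto_of_tendsto_of_tendsto_of_le_of_le tendsto_const_nhds hlen (fun _ ↦ zero_le)
      fun r ↦ ?_
    calc volume.restrict E (Ioi r) = volume (Ioi r ∩ E) := Measure.restrict_apply measurableSet_Ioi
      _ ≤ volume (Ioo r 1) := measure_mono fun t ⟨hrt, htE⟩ ↦ ⟨hrt, hE htE⟩
      _ = ENNReal.ofReal (1 - r) := Real.volume_Ioo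
  have htail := tendsto_setLIntegral_zero hEfin.ne hvol
  filter_upwards [htail.eventually_lt_const (ENNReal.ofReal_pos.2 one_half_pos),
    self_mem_nhdsWithin] with r hr hr1
  by_contra! hsub
  refine hr.not_ge ((ofReal_half_le_setLIntegral_inv_one_sub hr1).trans ?_)
  rw [Measure.restrict_restrict measurableSet_Ioi]
  exact lintegral_mono_set fun t ht ↦ ⟨ht.1, hsub t ht⟩

lemma antitoneOn_rpow_neg_mul_log_exp_div_rpow {l : ℝ} (hl : 0 ≤ l) :
    AntitoneOn (fun x : ℝ ↦ x ^ (-l) * log (exp 1 / x) ^ l) (Ioc 0 1) := by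
  rintro a ⟨ha, -⟩ b ⟨hb, hb1⟩ hab
  have hexp : 1 ≤ exp 1 := one_le_exp zero_le_one
  have hlog : 0 ≤ log (exp 1 / b) := log_nonneg ((one_le_div hb).2 (hb1.trans hexp))
  refine mul_le_mul (rpow_le_rpow_of_nonpos ha hab (neg_nonpos.2 hl)) ?_ (by positivity)
    (by positivity)
  gcongr

lemma exists_rpow_neg_mul_log_exp_div_rpow_le {l l' : ℝ} (hl : 0 < l) (hll' : l < l') :
    ∃ C > 0, ∀ x ∈ Ioc (0 : ℝ) 1, x ^ (-l) * log (exp 1 / x) ^ l ≤ C * x ^ (-l') := by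
  set ε := (l' - l) / l
  have hε : 0 < ε := div_pos (sub_pos.2 hll') hl
  refine ⟨exp 1 ^ (l' - l) / ε ^ l, by positivity, fun x ⟨hx, hx1⟩ ↦ ?_⟩
  have hexp : 1 ≤ exp 1 := one_le_exp zero_le_one
  have hlog : 0 ≤ log (exp 1 / x) := log_nonneg ((one_le_div hx).2 (hx1.trans hexp))
  have hεl : ε * l = l' - l := div_mul_cancel₀ _ hl.ne'
  have hx' : x ^ (-l') = x ^ (-l) / x ^ (l' - l) := by rw [← rpow_sub hx]; ring_nf
  calc x ^ (-l) * log (exp 1 / x) ^ l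
      ≤ x ^ (-l) * ((exp 1 / x) ^ ε / ε) ^ l := by
        gcongr
        exact log_le_rpow_div (by positivity) hε
    _ = exp 1 ^ (l' - l) / ε ^ l * x ^ (-l') := by
        rw [div_rpow (by positivity) hε.le, ← rpow_mul (by positivity), hεl,
          div_rpow (exp_pos 1).le hx.le, hx']
        field_simp

lemma MonotoneOn.exists_le_mul_one_sub_rpow_neg {h : ℝ → ℝ} (hmono : MonotoneOn h (Ioo 0 1))
    {p A : ℝ} (hp : 0 ≤ p) (hev : ∀ᶠ r in 𝓝[<] 1, h r ≤ A * (1 - r) ^ (-p)) :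
    ∃ K > 0, ∀ r ∈ Ioo (0 : ℝ) 1, h r ≤ K * (1 - r) ^ (-p) := by
  obtain ⟨r₀, hr₀, hsub⟩ := mem_nhdsLT_iff_exists_Ioo_subset.1 (hev.and (Ioo_mem_nhdsLT one_pos))
  obtain ⟨r₁, hr₀₁, hr₁⟩ := exists_between (mem_Iio.1 hr₀)
  have hr₁' := (hsub ⟨hr₀₁, hr₁⟩).2
  refine ⟨max (max A (h r₁)) 1, by positivity, fun r hr ↦ ?_⟩
  have hpow : 1 ≤ (1 - r) ^ (-p) :=
    one_le_rpow_of_pos_of_le_one_of_nonpos (by linarith [hr.2]) (by linarith [hr.1])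
      (neg_nonpos.2 hp)
  rcases le_or_gt r r₁ with hrr₁ | hr₁r
  · calc h r ≤ h r₁ := hmono hr hr₁' hrr₁
      _ ≤ max (max A (h r₁)) 1 := le_max_of_le_left (le_max_right _ _)
      _ ≤ max (max A (h r₁)) 1 * (1 - r) ^ (-p) := le_mul_of_one_le_right (by positivity) hpow
  · calc h r ≤ A * (1 - r) ^ (-p) := (hsub ⟨hr₀₁.trans hr₁r, hr.2⟩).1
      _ ≤ max (max A (h r₁)) 1 * (1 - r) ^ (-p) := by
        gcongr
        exact le_max_of_le_left (le_max_left _ _)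

theorem removal_of_exceptional_set_general (h : ℝ → ℝ)
    (hmono : MonotoneOn h (Set.Ioo 0 1))
    (l K : ℝ) (hl0 : 0 < l) (hK : 0 < K)
    (E : Set ℝ) (hE : E ⊆ Set.Ioo 0 1)
    (hEfin : (∫⁻ r in E, ENNReal.ofReal (1 / (1 - r))) < ⊤)
    (hbound : ∀ r ∈ Set.Ioo (0 : ℝ) 1 \ E,
      h r ≤ K * (1 - r) ^ (-l) * (Real.log (Real.exp 1 / (1 - r))) ^ l) :
    ∀ l' : ℝ, l < l' → l' < 1 →
      ∃ K' > 0, ∀ r ∈ Set.Ioo (0 : ℝ) 1, h r ≤ K' * (1 - r) ^ (-l') := by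
  intro l' hll' _
  obtain ⟨C, -, hC⟩ := exists_rpow_neg_mul_log_exp_div_rpow_le hl0 hll'
  refine hmono.exists_le_mul_one_sub_rpow_neg (A := K * C * 2 ^ l') (by linarith) ?_
  filter_upwards [eventually_exists_notMem_Ioo_of_setLIntegral_lt_top
    (hE.trans Ioo_subset_Iio_self) hEfin, Ioo_mem_nhdsLT one_pos] with r ⟨s, ⟨hrs, hsr⟩, hsE⟩ hr
  have hs : s ∈ Ioo (0 : ℝ) 1 := ⟨hr.1.trans hrs, by linarith [hr.2]⟩
  have hx : (1 - r) / 2 ∈ Ioc (0 : ℝ) 1 := ⟨by linarith [hr.2], by linarith [hr.1]⟩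
  have hy : 1 - s ∈ Ioc (0 : ℝ) 1 := ⟨by linarith [hs.2], by linarith [hs.1]⟩
  calc h r ≤ h s := hmono hr hs hrs.le
    _ ≤ K * ((1 - s) ^ (-l) * log (exp 1 / (1 - s)) ^ l) := by
        rw [← mul_assoc]; exact hbound s ⟨hs, hsE⟩
    _ ≤ K * (((1 - r) / 2) ^ (-l) * log (exp 1 / ((1 - r) / 2)) ^ l) :=
        mul_le_mul_of_nonneg_left
          (antitoneOn_rpow_neg_mul_log_exp_div_rpow hl0.le hx hy (by linarith)) hK.le
    _ ≤ K * (C * ((1 - r) / 2) ^ (-l')) := mul_le_mul_of_nonneg_left (hC _ hx) hK.le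
    _ = K * C * 2 ^ l' * (1 - r) ^ (-l') := by
        rw [div_rpow (by linarith [hr.2]) zero_le_two, rpow_neg zero_le_two]
        field_simp

/-- **Removal of the exceptional set.** Let `h : (0,1) → [0,∞)` be nondecreasing,
`0 < l < 1`, `K > 0`, and `E ⊆ (0,1)` measurable with `∫_E dr/(1−r) < ∞`. If
`h r ≤ K·(1−r)^{−l}·(log(e/(1−r)))^{l}` for all `r ∈ (0,1) \ E`, then for every
`l < l' < 1` there is `K' > 0` with `h r ≤ K'·(1−r)^{−l'}` for all `r ∈ (0,1)`. -/
theorem removal_of_exceptional_set (h : ℝ → ℝ)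
    (hmono : MonotoneOn h (Set.Ioo 0 1))
    (hnonneg : ∀ r ∈ Set.Ioo (0 : ℝ) 1, 0 ≤ h r)
    (l K : ℝ) (hl0 : 0 < l) (hl1 : l < 1) (hK : 0 < K)
    (E : Set ℝ) (hE : E ⊆ Set.Ioo 0 1) (hEm : MeasurableSet E)
    (hEfin : (∫⁻ r in E, ENNReal.ofReal (1 / (1 - r))) < ⊤)
    (hbound : ∀ r ∈ Set.Ioo (0 : ℝ) 1 \ E,
      h r ≤ K * (1 - r) ^ (-l) * (Real.log (Real.exp 1 / (1 - r))) ^ l) :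
    ∀ l' : ℝ, l < l' → l' < 1 →
      ∃ K' > 0, ∀ r ∈ Set.Ioo (0 : ℝ) 1, h r ≤ K' * (1 - r) ^ (-l') :=
  removal_of_exceptional_set_general h hmono l K hl0 hK E hE hEfin hbound
end
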